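/- arXiv:2111.12412 — 2 statements merged into one kernel-verified Lean document; each statement's English description precedes it below -/
import Mathlib

section
/- Let Γ be the supergraph of a graph G obtained from a (k,d)-shortcut system 𝒫 by adding an edge uv whenever 𝒫 contains a (u,v)-path. Then Γ is a ((k−1)/2)-shallow topological minor of G ∘ \overline{K_{d+1}}. -/
open SimpleGraph

variable {V W : Type}

/-- The strong product of two simple graphs. -/
def strongProd (G : SimpleGraph V) (H : SimpleGraph W) : SimpleGraph (V × W) where
  Adj a b := a ≠ b ∧ (a.1 = b.1 ∨ G.Adj a.1 b.1) ∧ (a.2 = b.2 ∨ H.Adj a.2 b.2)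
  symm := by
    constructor
    rintro a b ⟨hne, h1, h2⟩
    exact ⟨hne.symm, by tauto, by tauto⟩
  loopless := ⟨fun a h => h.1 rfl⟩

infixl:70 " ⊠ " => strongProd

/-- The lexicographic product of two simple graphs. -/
def lexProd (G : SimpleGraph V) (H : SimpleGraph W) : SimpleGraph (V × W) where
  Adj a b := G.Adj a.1 b.1 ∨ (a.1 = b.1 ∧ H.Adj a.2 b.2)
  symm := by
    constructor
    rintro a b (h | ⟨h, h'⟩)
    · exact Or.inl h.symm
    · exact Or.inr ⟨h.symm, h'.symm⟩
  loopless := by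
    constructor
    rintro a (h | ⟨_, h⟩)
    · exact G.irrefl h
    · exact H.irrefl h

/-- `G` is contained in `H`: `G` is isomorphic to a subgraph of `H`. -/
def Contains (G : SimpleGraph V) (H : SimpleGraph W) : Prop :=
  ∃ f : V → W, Function.Injective f ∧ ∀ ⦃u v⦄, G.Adj u v → H.Adj (f u) (f v)

/-- `(T, B)` is a tree-decomposition of `G`. -/
def IsTreeDecomp {ι : Type} (G : SimpleGraph V) (T : SimpleGraph ι) (B : ι → Set V) : Prop :=
  T.IsTree ∧
  (∀ ⦃u v⦄, G.Adj u v → ∃ i, u ∈ B i ∧ v ∈ B i) ∧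
  (∀ v : V, (T.induce {i | v ∈ B i}).Connected)

/-- The treewidth of `G` is at most `t`. -/
def TreewidthLE (G : SimpleGraph V) (t : ℕ) : Prop :=
  ∃ (ι : Type) (T : SimpleGraph ι) (B : ι → Set V),
    IsTreeDecomp G T B ∧ ∀ i, (B i).Finite ∧ (B i).ncard ≤ t + 1

/-- The row treewidth of `G` is at most `t`: `G` is contained in `H ⊠ P`
for some graph `H` of treewidth at most `t` and some path `P`. -/
def RowTreewidthLE (G : SimpleGraph V) (t : ℕ) : Prop :=
  ∃ (ι : Type) (H : SimpleGraph ι) (n : ℕ),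
    TreewidthLE H t ∧ Contains G (H ⊠ pathGraph n)

/-- `μ` is a model of an `r`-shallow minor `H` in `G`: branch sets are connected,
pairwise disjoint, of radius at most `r`, with adjacent branch sets for each edge of `H`. -/
def IsShallowMinorModel (H : SimpleGraph W) (G : SimpleGraph V) (r : ℕ) (μ : W → Set V) : Prop :=
  (∀ w, (G.induce (μ w)).Connected) ∧
  (∀ w, ∃ c : μ w, ∀ u : μ w, (G.induce (μ w)).dist c u ≤ r) ∧
  (Pairwise fun w w' => Disjoint (μ w) (μ w')) ∧
  (∀ ⦃w w'⦄, H.Adj w w' → ∃ u ∈ μ w, ∃ v ∈ μ w', G.Adj u v)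

/-- `H` is an `r`-shallow minor of `G`. -/
def ShallowMinor (H : SimpleGraph W) (G : SimpleGraph V) (r : ℕ) : Prop :=
  ∃ μ : W → Set V, IsShallowMinorModel H G r μ

/-- `H` is an `(m/2)`-shallow topological minor of `G`: a subgraph of `G` is an
`m`-subdivision of `H`, i.e. each edge of `H` is replaced by a path of length at most `m+1`,
and these paths are internally disjoint. -/
def ShallowTopMinor (H : SimpleGraph W) (G : SimpleGraph V) (m : ℕ) : Prop :=
  ∃ f : W → V, Function.Injective f ∧
  ∃ P : ∀ ⦃u v⦄, H.Adj u v → G.Walk (f u) (f v),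
    (∀ ⦃u v⦄ (h : H.Adj u v), (P h).IsPath ∧ (P h).length ≤ m + 1 ∧
      ∀ x ∈ (P h).support, x ∈ Set.range f → (x = f u ∨ x = f v)) ∧
    (∀ ⦃u v x y⦄ (h₁ : H.Adj u v) (h₂ : H.Adj x y), s(u,v) ≠ s(x,y) →
      ∀ z ∈ (P h₁).support, z ∈ (P h₂).support →
        (z = f u ∨ z = f v) ∧ (z = f x ∨ z = f y))

/-- The `s`-th power of a graph: vertices at distance at most `s` are adjacent. -/
def powG (G : SimpleGraph V) (s : ℕ) : SimpleGraph V where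
  Adj u v := u ≠ v ∧ ∃ p : G.Walk u v, p.length ≤ s
  symm := by
    constructor
    rintro u v ⟨h, p, hp⟩
    exact ⟨h.symm, p.reverse, by simpa using hp⟩
  loopless := ⟨fun v h => h.1 rfl⟩

/-- The maximum degree of `G` is at most `d`. -/
def MaxDegLE (G : SimpleGraph V) (d : ℕ) : Prop :=
  ∀ v, (G.neighborSet v).Finite ∧ (G.neighborSet v).ncard ≤ d
open SimpleGraph
variable {V W : Type}

/-- `R(G,⪯,v,s)`: vertices `w ⪯ v` reachable from `v` by a path of length at most `s`
whose internal vertices are all `≻ v`. -/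
def RSet (G : SimpleGraph V) (le : V → V → Prop) (v : V) (s : ℕ) : Set V :=
  {w | le w v ∧ ∃ p : G.Walk v w, p.length ≤ s ∧
    ∀ u ∈ p.support, u ≠ v → u ≠ w → (le v u ∧ u ≠ v)}

/-- `Q(G,⪯,v,s)`: vertices `w ⪯ v` reachable from `v` by a path of length at most `s`
whose internal vertices are all `≻ w`. -/
def QSet (G : SimpleGraph V) (le : V → V → Prop) (v : V) (s : ℕ) : Set V :=
  {w | le w v ∧ ∃ p : G.Walk v w, p.length ≤ s ∧
    ∀ u ∈ p.support, u ≠ v → u ≠ w → (le w u ∧ u ≠ w)}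

/-- The `s`-strong colouring number of `G` is at most `c`. -/
def ScolLE (G : SimpleGraph V) (s : ℕ) (c : ℕ) : Prop :=
  ∃ le : V → V → Prop, IsLinearOrder V le ∧
    ∀ v, (RSet G le v s).Finite ∧ (RSet G le v s).ncard ≤ c

/-- The `s`-weak colouring number of `G` is at most `c`. -/
def WcolLE (G : SimpleGraph V) (s : ℕ) (c : ℕ) : Prop :=
  ∃ le : V → V → Prop, IsLinearOrder V le ∧
    ∀ v, (QSet G le v s).Finite ∧ (QSet G le v s).ncard ≤ c

/-- The queue-number of `G` is at most `q`: there is a linear order of `V(G)` and an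
assignment of edges to `q` queues such that no two edges in the same queue nest. -/
def QueueLE (G : SimpleGraph V) (q : ℕ) : Prop :=
  ∃ le : V → V → Prop, IsLinearOrder V le ∧
    ∃ σ : V → V → ℕ,
      (∀ u v, σ u v = σ v u) ∧
      (∀ ⦃u v⦄, G.Adj u v → σ u v < q) ∧
      (∀ a b c d, G.Adj a b → G.Adj c d → σ a b = σ c d →
        (le a b ∧ a ≠ b) → (le c d ∧ c ≠ d) →
        ¬((le a c ∧ a ≠ c) ∧ (le d b ∧ d ≠ b)))

/-- A `(k,d)`-shortcut system for `G`: a set of paths of length at most `k` such that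
every vertex is an internal vertex of at most `d` of the paths. -/
structure ShortcutSystem (G : SimpleGraph V) (k d : ℕ) where
  paths : Set ((u : V) × (v : V) × G.Walk u v)
  isPath : ∀ p ∈ paths, p.2.2.IsPath
  lengthLE : ∀ p ∈ paths, p.2.2.length ≤ k
  internal : ∀ w : V,
    {p ∈ paths | w ∈ p.2.2.support ∧ w ≠ p.1 ∧ w ≠ p.2.1}.Finite ∧
    {p ∈ paths | w ∈ p.2.2.support ∧ w ≠ p.1 ∧ w ≠ p.2.1}.ncard ≤ d

/-- The supergraph `G^𝒫` of `G` obtained by adding an edge `uv` whenever `𝒫`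
contains a `(u,v)`-path. -/
def shortcutGraph (G : SimpleGraph V) {k d : ℕ} (P : ShortcutSystem G k d) : SimpleGraph V where
  Adj u v := u ≠ v ∧ (G.Adj u v ∨ ∃ p ∈ P.paths, (p.1 = u ∧ p.2.1 = v) ∨ (p.1 = v ∧ p.2.1 = u))
  symm := by
    constructor
    rintro u v ⟨h, h'⟩
    refine ⟨h.symm, ?_⟩
    rcases h' with h' | ⟨p, hp, h'⟩
    · exact Or.inl h'.symm
    · exact Or.inr ⟨p, hp, by tauto⟩
  loopless := ⟨fun v h => h.1 rfl⟩

/-- A `d`-clique lift of `G`: a choice `M v ⊆ N(v)` with `|M v| ≤ d` for each vertex `v`. -/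
structure CliqueLift (G : SimpleGraph V) (d : ℕ) where
  M : V → Set V
  subset_nbhd : ∀ v, M v ⊆ G.neighborSet v
  finite : ∀ v, (M v).Finite
  card_le : ∀ v, (M v).ncard ≤ d

/-- The graph `G^ℳ` obtained from `G` by adding the edge `uw` whenever there is a vertex `v`
with `u ∈ M v` and `w ∈ N(v)`. -/
def cliqueLiftGraph (G : SimpleGraph V) {d : ℕ} (ℳ : CliqueLift G d) : SimpleGraph V where
  Adj u w := u ≠ w ∧ (G.Adj u w ∨ ∃ v, (u ∈ ℳ.M v ∧ w ∈ G.neighborSet v) ∨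
    (w ∈ ℳ.M v ∧ u ∈ G.neighborSet v))
  symm := by
    constructor
    rintro u w ⟨h, h'⟩
    refine ⟨h.symm, ?_⟩
    rcases h' with h' | ⟨v, h'⟩
    · exact Or.inl h'.symm
    · exact Or.inr ⟨v, by tauto⟩
  loopless := ⟨fun v h => h.1 rfl⟩

/-- The `m × m` grid graph. -/
def gridGraph (m : ℕ) : SimpleGraph (Fin m × Fin m) where
  Adj a b := |(a.1 : ℤ) - b.1| + |(a.2 : ℤ) - b.2| = 1
  symm := by
    constructor
    intro a b h
    beta_reduce at h ⊢
    rw [abs_sub_comm ((b.1 : ℤ)), abs_sub_comm ((b.2 : ℤ))]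
    exact h
  loopless := by constructor; intro a h; simp at h

/- Take the copy `(v, 0)` of each vertex as its branch vertex. An edge of `G` stays an edge
between copies; a path `p ∈ 𝒫` is lifted by sending each internal vertex `w` to `(w, i)`, where
`1 ≤ i ≤ d` labels `p` injectively among the at most `d` paths of `𝒫` through `w`. A lifted
internal vertex thus determines its path, so distinct edges get internally disjoint routes. -/

open Function

theorem shallowTopMinor_of_owner {H : SimpleGraph W} {G : SimpleGraph V} {m : ℕ}
    (f : W → V) (hf : Injective f) (Q : ∀ ⦃u v⦄, H.Adj u v → G.Walk (f u) (f v))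
    (owner : V → Option (Sym2 W))
    (hQ : ∀ ⦃u v⦄ (h : H.Adj u v), (Q h).IsPath ∧ (Q h).length ≤ m + 1)
    (hends : ∀ ⦃u v⦄ (h : H.Adj u v), ∀ z ∈ (Q h).support, z ∈ Set.range f → z = f u ∨ z = f v)
    (howner : ∀ ⦃u v⦄ (h : H.Adj u v), ∀ z ∈ (Q h).support, z ∉ Set.range f →
      owner z = some s(u, v)) :
    ShallowTopMinor H G m := by
  refine ⟨f, hf, Q, fun u v h => ⟨(hQ h).1, (hQ h).2, hends h⟩,
    fun u v x y h₁ h₂ hne z hz₁ hz₂ => ?_⟩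
  by_cases hzf : z ∈ Set.range f
  · exact ⟨hends h₁ z hz₁ hzf, hends h₂ z hz₂ hzf⟩
  · exact (hne (Option.some_injective _
      ((howner h₁ z hz₁ hzf).symm.trans (howner h₂ z hz₂ hzf)))).elim

def lexProdLift (G : SimpleGraph V) (H : SimpleGraph W) (c : V → W) : G →g lexProd G H :=
  ⟨fun w => (w, c w), Or.inl⟩

@[simp]
theorem lexProdLift_apply (G : SimpleGraph V) (H : SimpleGraph W) (c : V → W) (w : V) :
    lexProdLift G H c w = (w, c w) :=
  rfl

theorem lexProdLift_injective (G : SimpleGraph V) (H : SimpleGraph W) (c : V → W) :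
    Injective (lexProdLift G H c) :=
  fun _ _ h => congrArg Prod.fst h

namespace ShortcutSystem

variable {G : SimpleGraph V} {k d : ℕ} (P : ShortcutSystem G k d)

def pathsThrough (w : V) : Set ((u : V) × (v : V) × G.Walk u v) :=
  {p ∈ P.paths | w ∈ p.2.2.support ∧ w ≠ p.1 ∧ w ≠ p.2.1}

-- Layer `0` is reserved for the branch vertices.
noncomputable def slot (w : V) : P.pathsThrough w ↪ Fin (d + 1) :=
  haveI : Finite (P.pathsThrough w) := (P.internal w).1.to_subtype
  (Finite.equivFin _).toEmbedding.trans <|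
    (Fin.castLEEmb ((Nat.card_coe_set_eq _).trans_le (P.internal w).2)).trans (Fin.succEmb d)

/-- The layer of `G ∘ K̄_{d+1}` in which the lift of `p` visits `w`. -/
noncomputable def layer (p : (u : V) × (v : V) × G.Walk u v) (w : V) : Fin (d + 1) :=
  open Classical in if h : p ∈ P.pathsThrough w then P.slot w ⟨p, h⟩ else 0

-- The endpoints of the path of `𝒫` whose lift passes through `z`, if any.
noncomputable def owner (z : V × Fin (d + 1)) : Option (Sym2 V) :=
  (partialInv (P.slot z.1) z.2).map fun p => s(p.1.1, p.1.2.1)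

theorem layer_eq_zero_iff {p : (u : V) × (v : V) × G.Walk u v} {w : V} :
    P.layer p w = 0 ↔ p ∉ P.pathsThrough w := by
  unfold layer
  split_ifs with h
  · exact iff_of_false (Fin.succ_ne_zero _) (not_not_intro h)
  · exact iff_of_true rfl h

theorem layer_fst (p : (u : V) × (v : V) × G.Walk u v) : P.layer p p.1 = 0 :=
  P.layer_eq_zero_iff.2 fun h => h.2.2.1 rfl

theorem layer_snd (p : (u : V) × (v : V) × G.Walk u v) : P.layer p p.2.1 = 0 :=
  P.layer_eq_zero_iff.2 fun h => h.2.2.2 rfl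

theorem owner_layer {p : (u : V) × (v : V) × G.Walk u v} {w : V} (h : p ∈ P.pathsThrough w) :
    P.owner (w, P.layer p w) = some s(p.1, p.2.1) := by
  simp only [layer, dif_pos h, owner, partialInv_left (P.slot w).injective, Option.map_some]

/-- `q` realizes the edge `uv` of `G^𝒫` in the subdivision. -/
def IsRoute {u v : V} (q : (lexProd G (⊥ : SimpleGraph (Fin (d + 1)))).Walk (u, 0) (v, 0)) :
    Prop :=
  q.IsPath ∧ q.length ≤ k - 1 + 1 ∧
    (∀ z ∈ q.support, z.2 = 0 → z = (u, 0) ∨ z = (v, 0)) ∧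
    ∀ z ∈ q.support, z.2 ≠ 0 → P.owner z = some s(u, v)

variable {P}

theorem IsRoute.reverse {u v : V}
    {q : (lexProd G (⊥ : SimpleGraph (Fin (d + 1)))).Walk (u, 0) (v, 0)} (hq : P.IsRoute q) :
    P.IsRoute q.reverse := by
  obtain ⟨hpath, hlen, hends, hown⟩ := hq
  refine ⟨hpath.reverse, by simpa using hlen, fun z hz h0 => ?_, fun z hz h0 => ?_⟩ <;>
    rw [Walk.support_reverse, List.mem_reverse] at hz
  · exact (hends z hz h0).symm
  · rw [Sym2.eq_swap]
    exact hown z hz h0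

theorem exists_isRoute_of_adj {u v : V} (h : G.Adj u v) :
    ∃ q : (lexProd G (⊥ : SimpleGraph (Fin (d + 1)))).Walk (u, 0) (v, 0), P.IsRoute q := by
  have hadj : (lexProd G (⊥ : SimpleGraph (Fin (d + 1)))).Adj (u, 0) (v, 0) := Or.inl h
  refine ⟨hadj.toWalk, ?_, by simp, fun z hz _ => ?_, fun z hz hz0 => ?_⟩
  · simpa using h.ne
  · simpa using hz
  · simp only [Adj.toWalk, Walk.support_cons, Walk.support_nil, List.mem_cons,
      List.not_mem_nil, or_false] at hz
    rcases hz with rfl | rfl <;> exact (hz0 rfl).elim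

theorem exists_isRoute_of_mem {p : (u : V) × (v : V) × G.Walk u v} (hp : p ∈ P.paths)
    (hne : p.1 ≠ p.2.1) :
    ∃ q : (lexProd G (⊥ : SimpleGraph (Fin (d + 1)))).Walk (p.1, 0) (p.2.1, 0), P.IsRoute q := by
  let q : (lexProd G (⊥ : SimpleGraph (Fin (d + 1)))).Walk (p.1, 0) (p.2.1, 0) :=
    (p.2.2.map (lexProdLift G ⊥ (P.layer p))).copy (by simp [layer_fst]) (by simp [layer_snd])
  have hsupp : q.support = p.2.2.support.map fun w => (w, P.layer p w) := by
    rw [Walk.support_copy, Walk.support_map]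
    rfl
  refine ⟨q, ?_, ?_, ?_, ?_⟩
  · rw [Walk.isPath_copy]
    exact (P.isPath p hp).map (lexProdLift_injective G ⊥ (P.layer p))
  · have hpos : p.2.2.length ≠ 0 := fun h0 => hne (Walk.eq_of_length_eq_zero h0)
    have := P.lengthLE p hp
    simp only [q, Walk.length_copy, Walk.length_map]
    omega
  all_goals
    simp only [hsupp, List.forall_mem_map]
    intro w hw
  · intro h0
    by_contra! hend
    exact P.layer_eq_zero_iff.1 h0 ⟨hp, hw, fun e => hend.1 (by rw [e, layer_fst]),
      fun e => hend.2 (by rw [e, layer_snd])⟩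
  · intro h0
    exact P.owner_layer (not_not.1 (mt P.layer_eq_zero_iff.2 h0))

theorem exists_isRoute {u v : V} (h : (shortcutGraph G P).Adj u v) :
    ∃ q : (lexProd G (⊥ : SimpleGraph (Fin (d + 1)))).Walk (u, 0) (v, 0), P.IsRoute q := by
  obtain ⟨hne, hG | ⟨p, hp, ⟨rfl, rfl⟩ | ⟨rfl, rfl⟩⟩⟩ := h
  · exact exists_isRoute_of_adj hG
  · exact exists_isRoute_of_mem hp hne
  · obtain ⟨q, hq⟩ := exists_isRoute_of_mem hp hne.symm
    exact ⟨q.reverse, hq.reverse⟩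

end ShortcutSystem

/-- `G^𝒫` is a `((k−1)/2)`-shallow topological minor of the lexicographic product
`G ∘ K̄_{d+1}`: a subgraph of `G ∘ K̄_{d+1}` is a `(k−1)`-subdivision of `G^𝒫`. -/
theorem shortcutGraph_shallowTopMinor {V : Type} (G : SimpleGraph V) (k d : ℕ)
    (P : ShortcutSystem G k d) :
    ShallowTopMinor (shortcutGraph G P) (lexProd G (⊥ : SimpleGraph (Fin (d + 1)))) (k - 1) := by
  choose Q hQ using fun u v (h : (shortcutGraph G P).Adj u v) => P.exists_isRoute h
  have mem_range : ∀ z : V × Fin (d + 1), z ∈ Set.range (fun v => (v, 0)) ↔ z.2 = 0 :=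
    fun z => ⟨by rintro ⟨w, rfl⟩; rfl, fun h => ⟨z.1, Prod.ext rfl h.symm⟩⟩
  refine shallowTopMinor_of_owner (fun v => (v, 0)) (fun _ _ h => congrArg Prod.fst h) Q
    P.owner (fun u v h => ⟨(hQ u v h).1, (hQ u v h).2.1⟩) (fun u v h z hz hzf => ?_)
    (fun u v h z hz hzf => ?_)
  · exact (hQ u v h).2.2.1 z hz ((mem_range z).1 hzf)
  · exact (hQ u v h).2.2.2 z hz (mt (mem_range z).2 hzf)
end

section
/- Let G be a graph, k ≥ 1 an integer, and d = Δ(G^{⌊k/2⌋}). Then the k-th power G^k is a ⌊k/2⌋-shallow minor of G ∘ \overline{K_{d+1}}. -/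
/-!
Put `r = ⌊k/2⌋`. Every ball `B(u, r)` of `G` has at most `d + 1` vertices, so it can be
labelled injectively by `c u : V → Fin (d + 1)`. The branch set of `v` is
`{(u, c u v) : u ∈ B(v, r)}`: a copy of `B(v, r)` in the lexicographic product, connected with
radius `r` around `(v, c v v)` since any map `x ↦ (x, g x)` is a homomorphism `G →g G ∘ H`.
Two branch sets meeting in `(u, i)` have centres `v, v' ∈ B(u, r)` with `c u v = i = c u v'`,
so `v = v'`. Finally a walk of length at most `k ≤ 2r + 1` from `v` to `v'` has an edge (the
middle one) whose ends lie in `B(v, r)` and `B(v', r)`.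
-/

open SimpleGraph

variable {V W : Type}

infixl:70 " ⊠ " => strongProd

open Set

namespace SimpleGraph

variable {G : SimpleGraph V}

def closedBall (G : SimpleGraph V) (v : V) (r : ℕ) : Set V :=
  {u | ∃ p : G.Walk v u, p.length ≤ r}

theorem self_mem_closedBall (v : V) (r : ℕ) : v ∈ G.closedBall v r :=
  ⟨.nil, r.zero_le⟩

theorem mem_closedBall_comm {u v : V} {r : ℕ} :
    u ∈ G.closedBall v r ↔ v ∈ G.closedBall u r :=
  ⟨fun ⟨p, hp⟩ => ⟨p.reverse, by simpa using hp⟩,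
    fun ⟨p, hp⟩ => ⟨p.reverse, by simpa using hp⟩⟩

theorem Walk.support_subset_closedBall {u v : V} (p : G.Walk v u) {r : ℕ} (hp : p.length ≤ r) :
    ∀ x ∈ p.support, x ∈ G.closedBall v r := by
  classical
  exact fun x hx => ⟨p.takeUntil x hx, (p.length_takeUntil_le_length hx).trans hp⟩

theorem closedBall_eq_insert_neighborSet_powG (v : V) (r : ℕ) :
    G.closedBall v r = insert v ((powG G r).neighborSet v) := by
  ext u
  constructor
  · rintro ⟨p, hp⟩
    rcases eq_or_ne v u with rfl | hne
    · exact mem_insert _ _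
    · exact Or.inr ⟨hne, p, hp⟩
  · rintro (rfl | ⟨-, p, hp⟩)
    exacts [self_mem_closedBall u r, ⟨p, hp⟩]

theorem encard_closedBall_le_of_maxDegLE {r d : ℕ} (hd : MaxDegLE (powG G r) d) (v : V) :
    (G.closedBall v r).encard ≤ d + 1 := by
  obtain ⟨hfin, hcard⟩ := hd v
  rw [closedBall_eq_insert_neighborSet_powG]
  calc (insert v ((powG G r).neighborSet v)).encard
      ≤ ((powG G r).neighborSet v).encard + 1 := encard_insert_le _ _
    _ ≤ d + 1 := by
      rw [← hfin.cast_ncard_eq]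
      exact add_le_add_left (by exact_mod_cast hcard) 1

theorem exists_injOn_closedBall_of_maxDegLE {r d : ℕ} (hd : MaxDegLE (powG G r) d) :
    ∃ c : V → V → Fin (d + 1), ∀ u, InjOn (c u) (G.closedBall u r) := by
  have h (u : V) : ∃ f : V → Fin (d + 1), InjOn f (G.closedBall u r) := by
    have hle := encard_closedBall_le_of_maxDegLE hd u
    obtain ⟨f, -, hf⟩ := (finite_of_encard_le_coe hle).exists_injOn_of_encard_le
      (t := (univ : Set (Fin (d + 1)))) (by simpa [encard_univ] using hle)
    exact ⟨f, hf⟩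
  exact Classical.skolem.mp h

theorem Walk.exists_adj_closedBall {v v' : V} (p : G.Walk v v') (hne : v ≠ v') {r : ℕ}
    (hp : p.length ≤ 2 * r + 1) :
    ∃ x ∈ G.closedBall v r, ∃ y ∈ G.closedBall v' r, G.Adj x y := by
  have hpos : p.length ≠ 0 := fun h => hne (p.eq_of_length_eq_zero h)
  set a := (p.length - 1) / 2
  refine ⟨p.getVert a, ⟨p.take a, ?_⟩, p.getVert (a + 1),
    mem_closedBall_comm.mpr ⟨p.drop (a + 1), ?_⟩, p.adj_getVert_succ (by omega)⟩
  · simp only [take_length]; omega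
  · simp only [drop_length]; omega

theorem Walk.length_induce {s : Set V} {u v : V} (p : G.Walk u v)
    (hp : ∀ x ∈ p.support, x ∈ s) :
    (p.induce s hp).length = p.length := by
  conv_rhs => rw [← p.map_induce hp]
  exact (length_map ..).symm

def lexProdSection (G : SimpleGraph V) (H : SimpleGraph W) (g : V → W) : G →g lexProd G H :=
  ⟨fun x => (x, g x), Or.inl⟩

def ballModel (G : SimpleGraph V) (r : ℕ) (c : V → V → W) (v : V) : Set (V × W) :=
  {a | a.1 ∈ G.closedBall v r ∧ a.2 = c a.1 v}

theorem mem_ballModel_self (r : ℕ) (c : V → V → W) (v : V) :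
    (v, c v v) ∈ G.ballModel r c v :=
  ⟨G.self_mem_closedBall v r, rfl⟩

theorem exists_walk_induce_ballModel (H : SimpleGraph W) (r : ℕ) (c : V → V → W) (v : V)
    (a : G.ballModel r c v) :
    ∃ q : ((lexProd G H).induce (G.ballModel r c v)).Walk
      ⟨(v, c v v), G.mem_ballModel_self r c v⟩ a, q.length ≤ r := by
  obtain ⟨⟨u, i⟩, ⟨p, hp⟩, hi⟩ := a
  obtain rfl : i = c u v := hi
  set p' := p.map (lexProdSection G H fun x => c x v)
  have hsupp : ∀ z ∈ p'.support, z ∈ G.ballModel r c v := by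
    simp only [p', Walk.support_map, List.mem_map]
    rintro _ ⟨x, hx, rfl⟩
    exact ⟨p.support_subset_closedBall hp x hx, rfl⟩
  exact ⟨p'.induce _ hsupp, (Walk.length_induce _ _).trans_le (by simpa [p'] using hp)⟩

theorem pairwise_disjoint_ballModel {r : ℕ} {c : V → V → W}
    (hc : ∀ u, InjOn (c u) (G.closedBall u r)) :
    Pairwise fun v v' => Disjoint (G.ballModel r c v) (G.ballModel r c v') := by
  intro v v' hne
  rw [Set.disjoint_left]
  rintro ⟨u, i⟩ ⟨hu, hi⟩ ⟨hu', hi'⟩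
  exact hne (hc u (mem_closedBall_comm.mp hu) (mem_closedBall_comm.mp hu') (hi.symm.trans hi'))

theorem isShallowMinorModel_ballModel (H : SimpleGraph W) {r k : ℕ} (hk : k ≤ 2 * r + 1)
    {c : V → V → W} (hc : ∀ u, InjOn (c u) (G.closedBall u r)) :
    IsShallowMinorModel (powG G k) (lexProd G H) r (G.ballModel r c) := by
  refine ⟨fun v => ?_, fun v => ⟨⟨_, G.mem_ballModel_self r c v⟩, fun a => ?_⟩,
    pairwise_disjoint_ballModel hc, ?_⟩
  · refine (connected_iff_exists_forall_reachable _).mpr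
      ⟨⟨_, G.mem_ballModel_self r c v⟩, fun a => ?_⟩
    obtain ⟨q, -⟩ := exists_walk_induce_ballModel H r c v a
    exact q.reachable
  · obtain ⟨q, hq⟩ := exists_walk_induce_ballModel H r c v a
    exact (dist_le q).trans hq
  · rintro v v' ⟨hne, p, hp⟩
    obtain ⟨x, hx, y, hy, hxy⟩ := p.exists_adj_closedBall hne (hp.trans hk)
    exact ⟨(x, c x v), ⟨hx, rfl⟩, (y, c y v'), ⟨hy, rfl⟩, Or.inl hxy⟩

end SimpleGraph

theorem power_shallowMinor_general {V : Type} (G : SimpleGraph V) (k d : ℕ)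
    (hd : MaxDegLE (powG G (k / 2)) d) :
    ShallowMinor (powG G k) (lexProd G (⊥ : SimpleGraph (Fin (d + 1)))) (k / 2) := by
  obtain ⟨c, hc⟩ := exists_injOn_closedBall_of_maxDegLE hd
  exact ⟨_, isShallowMinorModel_ballModel ⊥ (by omega) hc⟩

/-- For `d = Δ(G^{⌊k/2⌋})`, the `k`-th power `G^k` is a `⌊k/2⌋`-shallow minor of
`G ∘ K̄_{d+1}`. -/
theorem power_shallowMinor {V : Type} (G : SimpleGraph V) (k d : ℕ) (hk : 1 ≤ k)
    (hd : MaxDegLE (powG G (k / 2)) d) :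
    ShallowMinor (powG G k) (lexProd G (⊥ : SimpleGraph (Fin (d + 1)))) (k / 2) :=
  power_shallowMinor_general G k d hd
end
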